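/- arXiv:2311.09183 — 3 statements merged into one kernel-verified Lean document; each statement's English description precedes it below -/
import Mathlib

section
/- Every cycle (e_1, ..., e_n) in Z^d contains at least two edges e_i, e_j (i ≠ j) with g(e_i) = g(e_j), where g(e) is the unique z ∈ (2kZ)^d such that e ∈ Q_k^z. -/
/-- Vertices of the lattice `ℤ^d`. -/
abbrev LatV (d : ℕ) := Fin d → ℤ

/-- Two vertices of `ℤ^d` are adjacent (form an edge) if at ℓ¹-distance 1. -/
def latAdj {d : ℕ} (u v : LatV d) : Prop := (∑ i, |u i - v i|) = 1

/-- `x` lies in the box `[-k,k]^d + z`. -/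
def inBox {d : ℕ} (k : ℕ) (z x : LatV d) : Prop := ∀ i, |x i - z i| ≤ (k : ℤ)

/-- The edge `(x,y)` belongs to `Q_k^z`: both endpoints in `[-k,k]^d + z` and
no coordinate `ℓ` with `x ℓ = y ℓ = z ℓ - k`. -/
def inQ {d : ℕ} (k : ℕ) (z x y : LatV d) : Prop :=
  inBox k z x ∧ inBox k z y ∧ ¬ ∃ ℓ, x ℓ = z ℓ - (k : ℤ) ∧ y ℓ = z ℓ - (k : ℤ)

/-- `z ∈ (2kℤ)^d`. -/
def isMult {d : ℕ} (k : ℕ) (z : LatV d) : Prop := ∀ i, (2 * (k : ℤ)) ∣ z i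

/-- Sup-norm of a lattice vertex. -/
def supNorm {d : ℕ} (v : LatV d) : ℕ := Finset.univ.sup fun i => (v i).natAbs

/-- `r_w`: number of coordinates of `w` congruent to `k` mod `2k`. -/
def rFun {d : ℕ} (k : ℕ) (w : LatV d) : ℕ :=
  (Finset.univ.filter fun ℓ => (2 * (k : ℤ)) ∣ (w ℓ - (k : ℤ))).card

/-- An edge of `ℤ^d` changes exactly one coordinate, by `±1`. -/
lemma step_lemma {d : ℕ} {u w : LatV d} (h : latAdj u w) :
    ∃ j, (u j = w j + 1 ∨ u j = w j - 1) ∧ ∀ ℓ, ℓ ≠ j → u ℓ = w ℓ := by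
  unfold latAdj at h
  have hs' : ∑ i, (u i - w i).natAbs = 1 := by
    have hs : ((∑ i, (u i - w i).natAbs : ℕ) : ℤ) = 1 := by
      rw [Nat.cast_sum, ← h]
      exact Finset.sum_congr rfl fun i _ => (Int.abs_eq_natAbs _).symm
    exact_mod_cast hs
  have hne : ∃ j, (u j - w j).natAbs ≠ 0 := by
    by_contra hc
    push_neg at hc
    have : ∑ i, (u i - w i).natAbs = 0 := Finset.sum_eq_zero (fun i _ => hc i)
    omega
  obtain ⟨j, hj⟩ := hne
  have hle : (u j - w j).natAbs ≤ 1 := by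
    rw [← hs']
    exact Finset.single_le_sum (f := fun i => (u i - w i).natAbs)
      (fun i _ => Nat.zero_le _) (Finset.mem_univ j)
  refine ⟨j, by omega, ?_⟩
  intro ℓ hℓ
  have h0 : ∑ i ∈ Finset.univ.erase j, (u i - w i).natAbs = 0 := by
    have hsplit : (u j - w j).natAbs + ∑ i ∈ Finset.univ.erase j, (u i - w i).natAbs
        = ∑ i, (u i - w i).natAbs :=
      Finset.add_sum_erase Finset.univ (fun i => (u i - w i).natAbs) (Finset.mem_univ j)
    omega
  have := Finset.sum_eq_zero_iff.mp h0 ℓ (Finset.mem_erase.mpr ⟨hℓ, Finset.mem_univ ℓ⟩)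
  omega

/-- Per-coordinate determination of the box label. -/
lemma coordLemma (k z z' p q s : ℤ) (hk : 1 ≤ k) (hz : 2*k ∣ z) (hz' : 2*k ∣ z')
    (h1 : |p - z| ≤ k) (h2 : |q - z| ≤ k) (h3 : |q - z'| ≤ k) (h4 : |s - z'| ≤ k)
    (e1 : ¬(p = z - k ∧ q = z - k)) (e2 : ¬(q = z' - k ∧ s = z' - k))
    (hpq : p = q ∨ p = q + 1 ∨ p = q - 1) (hsq : s = q ∨ s = q + 1 ∨ s = q - 1)
    (hm : 2*k ∣ q - k → (p ≠ q + 1 ∧ s ≠ q + 1)) : z = z' := by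
  rw [abs_le] at h1 h2 h3 h4
  rcases eq_or_ne (z' - z) 0 with h0 | h0
  · omega
  · have hdvd : 2*k ∣ z' - z := dvd_sub hz' hz
    have h2k : 2*k ≤ |z' - z| := Int.le_of_dvd (abs_pos.mpr h0) ((dvd_abs _ _).mpr hdvd)
    have habs : |z' - z| = z' - z ∨ |z' - z| = -(z' - z) := abs_choice _
    have hcase : z' = z + 2*k ∨ z' = z - 2*k := by omega
    rcases hcase with hc | hc
    · -- q = z + k = z' - k
      have hq : q = z + k := by omega
      have hdq : 2*k ∣ q - k := by rw [hq]; simpa using hz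
      have hs1 : s ≠ q + 1 := (hm hdq).2
      have hs2 : s ≠ q := fun hss => e2 ⟨by omega, by omega⟩
      omega
    · have hq : q = z - k := by omega
      have hdq : 2*k ∣ q - k := by
        have : q - k = z - 2*k := by omega
        rw [this]
        exact dvd_sub hz ⟨1, by ring⟩
      have hp1 : p ≠ q + 1 := (hm hdq).1
      have hp2 : p ≠ q := fun hpp => e1 ⟨by omega, by omega⟩
      omega

/-- Stepping up from a coordinate `≡ k (mod 2k)` strictly decreases `rFun`. -/
lemma rstep {d : ℕ} {k : ℕ} (hk : 1 ≤ k) (a b : LatV d) (j : Fin d)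
    (hj : (2*(k:ℤ)) ∣ a j - k) (hb : b j = a j + 1) (heq : ∀ ℓ, ℓ ≠ j → b ℓ = a ℓ) :
    rFun k b < rFun k a := by
  unfold rFun
  have hsub : (Finset.univ.filter fun ℓ => (2*(k:ℤ)) ∣ b ℓ - k)
      = (Finset.univ.filter fun ℓ => (2*(k:ℤ)) ∣ a ℓ - k).erase j := by
    ext ℓ
    simp only [Finset.mem_filter, Finset.mem_erase, Finset.mem_univ, true_and]
    constructor
    · intro hd
      rcases eq_or_ne ℓ j with rfl | hne
      · exfalso
        have h1 : (2*(k:ℤ)) ∣ 1 := by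
          have hd2 := dvd_sub hd hj
          have : (b ℓ - k) - (a ℓ - k) = 1 := by rw [hb]; ring
          rwa [this] at hd2
        have h2 := Int.le_of_dvd one_pos h1
        have : (1:ℤ) ≤ (k:ℤ) := by exact_mod_cast hk
        omega
      · rw [heq ℓ hne] at hd; exact ⟨hne, hd⟩
    · rintro ⟨hne, hd⟩; rw [heq ℓ hne]; exact hd
  rw [hsub]
  exact Finset.card_erase_lt_of_mem (Finset.mem_filter.mpr ⟨Finset.mem_univ j, hj⟩)

/-- At a vertex where the two incident edges lie in different boxes, one
neighbouring endpoint has strictly smaller `rFun`. -/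
lemma vertex_lemma {d : ℕ} {k : ℕ} (hk : 1 ≤ k) (u w x z z' : LatV d)
    (huw : latAdj u w) (hwx : latAdj w x)
    (hz : isMult k z) (hz' : isMult k z')
    (hq : inQ k z u w) (hq' : inQ k z' w x) (hne : z ≠ z') :
    rFun k u < rFun k w ∨ rFun k x < rFun k w := by
  obtain ⟨j1, hj1, heq1⟩ := step_lemma huw
  obtain ⟨j2, hj2, heq2⟩ := step_lemma hwx
  by_cases hG : (2*(k:ℤ)) ∣ w j1 - k ∧ u j1 = w j1 + 1
  · left
    exact rstep hk w u j1 hG.1 hG.2 (fun ℓ hℓ => heq1 ℓ hℓ)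
  by_cases hF : (2*(k:ℤ)) ∣ w j2 - k ∧ x j2 = w j2 + 1
  · right
    refine rstep hk w x j2 hF.1 hF.2 (fun ℓ hℓ => (heq2 ℓ hℓ).symm)
  exfalso
  apply hne
  funext ℓ
  refine coordLemma (k:ℤ) (z ℓ) (z' ℓ) (u ℓ) (w ℓ) (x ℓ)
    (by exact_mod_cast hk) (hz ℓ) (hz' ℓ)
    (hq.1 ℓ) (hq.2.1 ℓ) (hq'.1 ℓ) (hq'.2.1 ℓ)
    (fun hc => hq.2.2 ⟨ℓ, hc⟩) (fun hc => hq'.2.2 ⟨ℓ, hc⟩)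
    ?_ ?_ ?_
  · rcases eq_or_ne ℓ j1 with rfl | hℓ
    · rcases hj1 with h | h
      · right; left; exact h
      · right; right; exact h
    · left; exact heq1 ℓ hℓ
  · rcases eq_or_ne ℓ j2 with rfl | hℓ
    · rcases hj2 with h | h
      · right; right; omega
      · right; left; omega
    · left; exact (heq2 ℓ hℓ).symm
  · intro hdvd
    constructor
    · intro hu
      have hℓ : ℓ = j1 := by
        by_contra hc
        have := heq1 ℓ hc
        omega
      subst hℓ
      exact hG ⟨hdvd, hu⟩
    · intro hx
      have hℓ : ℓ = j2 := by
        by_contra hc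
        have := heq2 ℓ hc
        omega
      subst hℓ
      exact hF ⟨hdvd, hx⟩

/-- Every cycle `(e_1, …, e_n)` in `ℤ^d` contains two distinct edges lying in the
same box `Q_k^z`; here `g i` is the (unique) box of the `i`-th edge. -/
theorem cycle_two_edges_same_box (d k n : ℕ) (hd : 1 ≤ d) (hk : 1 ≤ k) (hn : 3 ≤ n)
    (v : ℕ → LatV d) (hclosed : v n = v 0)
    (hdistinct : ∀ i j, i < n → j < n → i ≠ j → v i ≠ v j)
    (hadj : ∀ i, i < n → latAdj (v i) (v (i + 1)))
    (g : ℕ → LatV d)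
    (hg : ∀ i, i < n → isMult k (g i) ∧ inQ k (g i) (v i) (v (i + 1))) :
    ∃ i j, i < n ∧ j < n ∧ i ≠ j ∧ g i = g j := by
  by_contra hcon
  push_neg at hcon
  obtain ⟨m, hm, hmin⟩ : ∃ m, m < n ∧ ∀ i, i < n → rFun k (v m) ≤ rFun k (v i) := by
    obtain ⟨m, hm1, hm2⟩ := Finset.exists_min_image (Finset.range n)
      (fun i => rFun k (v i)) ⟨0, Finset.mem_range.mpr (by omega)⟩
    exact ⟨m, Finset.mem_range.mp hm1, fun i hi => hm2 i (Finset.mem_range.mpr hi)⟩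
  -- previous edge index
  set p := if m = 0 then n - 1 else m - 1 with hp
  have hpn : p < n := by rw [hp]; split <;> omega
  have hpm : p ≠ m := by rw [hp]; split <;> omega
  have hp1 : v (p + 1) = v m := by
    rw [hp]
    split
    · rename_i h0
      have : n - 1 + 1 = n := by omega
      rw [this, hclosed, h0]
    · rename_i h0
      have : m - 1 + 1 = m := by omega
      rw [this]
  have huw : latAdj (v p) (v m) := by
    have := hadj p hpn
    rwa [hp1] at this
  have h1 := hg p hpn
  have h2 := hg m hm
  have hq1 : inQ k (g p) (v p) (v m) := by
    have := h1.2
    rwa [hp1] at this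
  have hA := vertex_lemma hk (v p) (v m) (v (m+1)) (g p) (g m) huw (hadj m hm)
    h1.1 h2.1 hq1 h2.2 (hcon p m hpn hm hpm)
  rcases hA with h | h
  · have := hmin p hpn
    omega
  · by_cases hm1 : m + 1 < n
    · have := hmin (m+1) hm1
      omega
    · have hmn : m + 1 = n := by omega
      rw [hmn, hclosed] at h
      have := hmin 0 (by omega)
      omega
end

section
/- Let u, v be adjacent vertices in Z^d with e = (u,v), and define r_w to be the number of coordinates of a vertex w that are congruent to k modulo 2k. If r_u ≤ r_v, and for each ℓ let n_ℓ be the unique integer with u_ℓ - 2k n_ℓ ∈ (-k, k], then z = (2k n_1, ..., 2k n_d) satisfies e ∈ Q_k^z. -/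
/-- If `u, v` are adjacent, `r_u ≤ r_v`, and `n_ℓ` is the unique integer with
`u_ℓ - 2k n_ℓ ∈ (-k, k]`, then `z = (2k n_1, …, 2k n_d)` satisfies `(u,v) ∈ Q_k^z`. -/
theorem explicit_box_membership (d k : ℕ) (hd : 1 ≤ d) (hk : 1 ≤ k)
    (u v : LatV d) (huv : latAdj u v) (hr : rFun k u ≤ rFun k v)
    (nvec : Fin d → ℤ)
    (hn : ∀ ℓ, u ℓ - 2 * (k : ℤ) * nvec ℓ ∈ Set.Ioc (-(k : ℤ)) (k : ℤ)) :
    inQ k (fun ℓ => 2 * (k : ℤ) * nvec ℓ) u v := by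
  have hn' : ∀ ℓ, -(k:ℤ) < u ℓ - 2 * (k : ℤ) * nvec ℓ ∧ u ℓ - 2 * (k:ℤ) * nvec ℓ ≤ k := by
    intro ℓ; exact hn ℓ
  -- find the unique coordinate where u and v differ
  obtain ⟨j, hj⟩ : ∃ j, u j ≠ v j := by
    by_contra h
    push_neg at h
    have h0 : (∑ i, |u i - v i|) = 0 :=
      Finset.sum_eq_zero fun i _ => by rw [h i, sub_self, abs_zero]
    rw [latAdj, h0] at huv; exact one_ne_zero huv.symm
  have hnn : ∀ i ∈ Finset.univ, (0:ℤ) ≤ |u i - v i| := fun i _ => abs_nonneg _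
  have hle : |u j - v j| ≤ 1 := huv ▸ Finset.single_le_sum hnn (Finset.mem_univ j)
  have hge : 1 ≤ |u j - v j| := Int.one_le_abs (sub_ne_zero.mpr hj)
  have hj1 : |u j - v j| = 1 := le_antisymm hle hge
  have hrest : ∀ i, i ≠ j → u i = v i := by
    intro i hij
    by_contra h
    have h1 : 1 ≤ |u i - v i| := Int.one_le_abs (sub_ne_zero.mpr h)
    have hsub : ({i, j} : Finset (Fin d)) ⊆ Finset.univ := Finset.subset_univ _
    have hsum : (∑ l ∈ ({i, j} : Finset (Fin d)), |u l - v l|) ≤ ∑ l, |u l - v l| :=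
      Finset.sum_le_sum_of_subset_of_nonneg hsub fun l _ _ => abs_nonneg _
    rw [Finset.sum_pair hij, huv] at hsum
    omega
  have hjv : u j - v j = 1 ∨ u j - v j = -1 := (abs_eq (by norm_num)).mp hj1
  refine ⟨?_, ?_, ?_⟩
  · intro ℓ
    have := hn' ℓ
    show |u ℓ - 2 * (k:ℤ) * nvec ℓ| ≤ (k:ℤ)
    rw [abs_le]; omega
  · intro ℓ
    by_cases hℓ : ℓ = j
    · subst hℓ
      rcases hjv with hcase | hcase
      · -- v ℓ = u ℓ - 1
        have := hn' ℓ
        show |v ℓ - 2 * (k:ℤ) * nvec ℓ| ≤ (k:ℤ)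
        rw [abs_le]; omega
      · -- v ℓ = u ℓ + 1 : must rule out u ℓ - z ℓ = k
        have hnℓ := hn' ℓ
        have hne : u ℓ - 2 * (k:ℤ) * nvec ℓ ≠ k := by
          intro hjk
          have hjU : ℓ ∈ Finset.univ.filter fun i => (2 * (k : ℤ)) ∣ (u i - (k : ℤ)) := by
            simp only [Finset.mem_filter, Finset.mem_univ, true_and]
            exact ⟨nvec ℓ, by omega⟩
          have hsubv : (Finset.univ.filter fun i => (2 * (k : ℤ)) ∣ (v i - (k : ℤ))) ⊆
              (Finset.univ.filter fun i => (2 * (k : ℤ)) ∣ (u i - (k : ℤ))).erase ℓ := by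
            intro i hi
            simp only [Finset.mem_filter, Finset.mem_univ, true_and] at hi
            by_cases hij : i = ℓ
            · subst hij
              exfalso
              have h1 : (2 * (k:ℤ)) ∣ 1 := by
                have : v i - (k:ℤ) = 2 * (k:ℤ) * nvec i + 1 := by omega
                rw [this] at hi
                exact (dvd_add_right (dvd_mul_right _ _)).mp hi
              have := Int.le_of_dvd one_pos h1
              omega
            · rw [Finset.mem_erase]
              refine ⟨hij, ?_⟩
              simp only [Finset.mem_filter, Finset.mem_univ, true_and]
              rwa [hrest i hij]
          have hlt : rFun k v < rFun k u := by
            calc rFun k v ≤ ((Finset.univ.filter fun i => (2 * (k : ℤ)) ∣ (u i - (k : ℤ))).erase ℓ).card :=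
                  Finset.card_le_card hsubv
              _ < rFun k u := Finset.card_erase_lt_of_mem hjU
          omega
        show |v ℓ - 2 * (k:ℤ) * nvec ℓ| ≤ (k:ℤ)
        rw [abs_le]; omega
    · have := hn' ℓ
      show |v ℓ - 2 * (k:ℤ) * nvec ℓ| ≤ (k:ℤ)
      rw [← hrest ℓ hℓ, abs_le]; omega
  · rintro ⟨ℓ, h1, h2⟩
    have := hn' ℓ
    have h1' : u ℓ = 2 * (k:ℤ) * nvec ℓ - k := h1
    omega
end

section
/- Let H be a graph on the vertex set of the box B_{m+√n} ⊆ Z^d such that every connected component of H intersects both B_m and the boundary of B_{m+√n}. Then every union W of connected components of H which is nontrivial (i.e., both W and its complement within the vertex set contain at least one component) has, for every integer r with m < r < m+√n, at least one lattice edge between W and its complement whose endpoint v ∈ W satisfies ‖v‖_∞ = r. -/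
/-! Every component of `H` reaches from `B_m` to the boundary of `B_{m+s}` by lattice steps,
which change the sup-norm by at most one, so it meets every level `r` in between. For `d ≥ 2`
the level set `{‖v‖_∞ = r}` is connected in `ℤ^d`, so a path inside it from a vertex of `W` to
a vertex outside `W` has to leave `W` along an edge, and that edge starts at level `r`. -/

namespace SimpleGraph

variable {V : Type*} {G : SimpleGraph V}

theorem reachable_of_adj_add_one {f : ℤ → V} {lo hi : ℤ}
    (hf : ∀ k, lo ≤ k → k < hi → G.Adj (f k) (f (k + 1))) {a b : ℤ}
    (ha : a ∈ Set.Icc lo hi) (hb : b ∈ Set.Icc lo hi) : G.Reachable (f a) (f b) := by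
  wlog hab : a ≤ b generalizing a b
  · exact (this hb ha (le_of_not_ge hab)).symm
  induction b, hab using Int.leInduction with
  | base => rfl
  | succ k hak ih =>
    obtain ⟨hlo, hhi⟩ := ha
    obtain ⟨-, hkhi⟩ := hb
    exact (ih ⟨by lia, by lia⟩).trans (hf k (by lia) (by lia)).reachable

/-- Discrete intermediate value theorem. -/
theorem Reachable.exists_eq_of_le_add_one (f : V → ℕ) (hf : ∀ x y, G.Adj x y → f y ≤ f x + 1)
    {x y : V} (hxy : G.Reachable x y) {r : ℕ} (hx : f x ≤ r) (hy : r ≤ f y) :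
    ∃ v, G.Reachable x v ∧ f v = r := by
  classical
  obtain ⟨p⟩ := hxy
  by_cases hxr : f x = r
  · exact ⟨x, .rfl, hxr⟩
  obtain ⟨e, he, hlt, hge⟩ :=
    p.exists_boundary_dart {v | f v < r} (show f x < r by lia) (show ¬f y < r by lia)
  have hlt : f e.fst < r := hlt
  have hge : ¬f e.snd < r := hge
  refine ⟨e.snd, ⟨p.takeUntil _ (p.dart_snd_mem_support_of_mem_darts he)⟩, ?_⟩
  have := hf _ _ e.adj
  lia

end SimpleGraph

lemma latAdj_comm {d : ℕ} {u v : LatV d} : latAdj u v ↔ latAdj v u := by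
  simp only [latAdj, abs_sub_comm]

lemma latAdj_update_update {d : ℕ} (u : LatV d) (i : Fin d) (b c : ℤ) :
    latAdj (Function.update u i b) (Function.update u i c) ↔ |b - c| = 1 := by
  unfold latAdj
  rw [Finset.sum_eq_single i (fun j _ hji => by simp [Function.update_of_ne hji])
    (fun h => absurd (Finset.mem_univ i) h)]
  simp

lemma supNorm_le_iff {d k : ℕ} {v : LatV d} : supNorm v ≤ k ↔ ∀ i, (v i).natAbs ≤ k := by
  simp [supNorm, Finset.sup_le_iff]

lemma supNorm_eq_of_natAbs_eq {d k : ℕ} {v : LatV d} (hle : ∀ i, (v i).natAbs ≤ k) {j : Fin d}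
    (hj : (v j).natAbs = k) : supNorm v = k :=
  le_antisymm (supNorm_le_iff.mpr hle)
    (hj ▸ Finset.le_sup (f := fun i => (v i).natAbs) (Finset.mem_univ j))

lemma exists_natAbs_eq_supNorm {d : ℕ} [NeZero d] (v : LatV d) :
    ∃ j, (v j).natAbs = supNorm v := by
  obtain ⟨j, -, hj⟩ := Finset.exists_mem_eq_sup Finset.univ Finset.univ_nonempty
    (fun i => (v i).natAbs)
  exact ⟨j, hj.symm⟩

lemma supNorm_le_add_one_of_latAdj {d : ℕ} {u v : LatV d} (h : latAdj u v) :
    supNorm v ≤ supNorm u + 1 := by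
  refine supNorm_le_iff.mpr fun i => ?_
  have hi : |u i - v i| ≤ 1 :=
    h ▸ Finset.single_le_sum (f := fun i => |u i - v i|) (fun i _ => abs_nonneg _)
      (Finset.mem_univ i)
  have hu : (u i).natAbs ≤ supNorm u := supNorm_le_iff.mp le_rfl i
  rw [abs_le] at hi
  omega

def levelGraph (d r : ℕ) : SimpleGraph (LatV d) where
  Adj u v := latAdj u v ∧ supNorm u = r ∧ supNorm v = r
  symm := ⟨fun _ _ h => ⟨latAdj_comm.mp h.1, h.2.2, h.2.1⟩⟩
  loopless := ⟨fun _ h => by simp [latAdj] at h⟩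

@[simp]
lemma levelGraph_adj {d r : ℕ} {u v : LatV d} :
    (levelGraph d r).Adj u v ↔ latAdj u v ∧ supNorm u = r ∧ supNorm v = r :=
  Iff.rfl

section levelGraph

variable {d r : ℕ} {u : LatV d}

lemma levelGraph_reachable_update (hu : ∀ j, (u j).natAbs ≤ r) {i k : Fin d} (hik : i ≠ k)
    (hk : (u k).natAbs = r) {b : ℤ} (hb : b.natAbs ≤ r) :
    (levelGraph d r).Reachable u (Function.update u i b) := by
  have hlevel : ∀ c : ℤ, c.natAbs ≤ r → supNorm (Function.update u i c) = r := fun c hc =>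
    supNorm_eq_of_natAbs_eq (j := k)
      (fun j => by rcases eq_or_ne j i with rfl | hj <;> simp [*])
      (by rwa [Function.update_of_ne hik.symm])
  have hstep : ∀ c : ℤ, -r ≤ c → c < r →
      (levelGraph d r).Adj (Function.update u i c) (Function.update u i (c + 1)) :=
    fun c hlo hhi => levelGraph_adj.mpr ⟨(latAdj_update_update u i c (c + 1)).mpr (by simp),
      hlevel c (by lia), hlevel (c + 1) (by lia)⟩
  have hui := hu i
  simpa using SimpleGraph.reachable_of_adj_add_one hstep
    (a := u i) (b := b) ⟨by lia, by lia⟩ ⟨by lia, by lia⟩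

lemma levelGraph_reachable_const (hd : 2 ≤ d) (hu : supNorm u = r) :
    (levelGraph d r).Reachable u (fun _ => (r : ℤ)) := by
  classical
  have : NeZero d := ⟨by lia⟩
  have : Nontrivial (Fin d) := Fin.nontrivial_iff_two_le.mpr hd
  set c : LatV d := fun _ => (r : ℤ)
  have hle : ∀ i, (u i).natAbs ≤ r := supNorm_le_iff.mp hu.le
  obtain ⟨j, hj⟩ := exists_natAbs_eq_supNorm u
  rw [hu] at hj
  have hpiece : ∀ S : Finset (Fin d), ∀ i, (S.piecewise c u i).natAbs ≤ r := fun S i => by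
    by_cases hi : i ∈ S <;> simp [Finset.piecewise, hi, c, hle]
  -- With coordinate `j` pinned at `±r`, set every other coordinate to `r`, then move `j`.
  have hface : ∀ S : Finset (Fin d), j ∉ S → (levelGraph d r).Reachable u (S.piecewise c u) := by
    intro S
    induction S using Finset.induction_on with
    | empty => simp
    | insert i S hiS ih =>
      intro hjS
      rw [Finset.piecewise_insert]
      refine (ih (fun h => hjS (Finset.mem_insert_of_mem h))).trans
        (levelGraph_reachable_update (hpiece S) (k := j) ?_ ?_ (by simp [c]))
      · rintro rfl; exact hjS (Finset.mem_insert_self _ _)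
      · rwa [Finset.piecewise_eq_of_notMem _ _ _ (fun h => hjS (Finset.mem_insert_of_mem h))]
  obtain ⟨i, hij⟩ := exists_ne j
  have hlast := levelGraph_reachable_update (u := Function.update c j (u j))
    (by simpa using hpiece (Finset.univ.erase j)) hij.symm (k := i)
    (by simp [Function.update_of_ne hij, c]) (b := r) (by simp)
  have hstart := hface (Finset.univ.erase j) (Finset.notMem_erase j _)
  rw [Finset.piecewise_erase_univ] at hstart
  rw [Function.update_idem, Function.update_eq_self_iff.mpr rfl] at hlast
  exact hstart.trans hlast

theorem levelGraph_reachable (hd : 2 ≤ d) {v : LatV d} (hu : supNorm u = r)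
    (hv : supNorm v = r) : (levelGraph d r).Reachable u v :=
  (levelGraph_reachable_const hd hu).trans (levelGraph_reachable_const hd hv).symm

end levelGraph

/-- Let `H` be a subgraph of the lattice on the vertex set of the box `B_{m+s} ⊆ ℤ^d`
(`d ≥ 2`) such that every connected component of `H` meets both `B_m` and the boundary
`{‖·‖_∞ = m+s}`. Then for every nontrivial union `W` of connected components of `H`
and every level `r` with `m < r < m+s`, there is a lattice edge from a vertex `v ∈ W`
with `‖v‖_∞ = r` to a vertex outside `W`. -/
theorem boundary_edge_at_every_level (d m s : ℕ) (hd : 2 ≤ d)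
    (H : SimpleGraph {v : LatV d // supNorm v ≤ m + s})
    (hlat : ∀ a b, H.Adj a b → latAdj a.1 b.1)
    (hcross : ∀ v : {v : LatV d // supNorm v ≤ m + s},
      ∃ x y, H.Reachable v x ∧ H.Reachable v y ∧
        supNorm x.1 ≤ m ∧ supNorm y.1 = m + s)
    (W : Set {v : LatV d // supNorm v ≤ m + s})
    (hWcomp : ∀ a b, H.Reachable a b → (a ∈ W ↔ b ∈ W))
    (hWne : ∃ a, a ∈ W) (hWne' : ∃ b, b ∉ W) :
    ∀ r : ℕ, m < r → r < m + s →
      ∃ v u : {v : LatV d // supNorm v ≤ m + s},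
        v ∈ W ∧ u ∉ W ∧ latAdj u.1 v.1 ∧ supNorm v.1 = r := by
  intro r hmr hrs
  have hlevel : ∀ a, ∃ v, H.Reachable a v ∧ supNorm v.1 = r := fun a => by
    obtain ⟨x, y, hax, hay, hx, hy⟩ := hcross a
    obtain ⟨v, hxv, hv⟩ := (hax.symm.trans hay).exists_eq_of_le_add_one (r := r)
      (fun w => supNorm w.1) (fun _ _ h => supNorm_le_add_one_of_latAdj (hlat _ _ h))
      (by lia) (by lia)
    exact ⟨v, hax.trans hxv, hv⟩
  obtain ⟨a, ha⟩ := hWne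
  obtain ⟨b, hb⟩ := hWne'
  obtain ⟨va, hava, hva⟩ := hlevel a
  obtain ⟨vb, hbvb, hvb⟩ := hlevel b
  obtain ⟨p⟩ := levelGraph_reachable hd hva hvb
  obtain ⟨e, -, ⟨v, hvW, hve⟩, hout⟩ := p.exists_boundary_dart (Subtype.val '' W)
    ⟨va, (hWcomp a va hava).mp ha, rfl⟩
    (fun ⟨w, hw, hwb⟩ => hb ((hWcomp b vb hbvb).mpr (Subtype.ext hwb ▸ hw)))
  obtain ⟨hadj, hvr, hur⟩ := levelGraph_adj.mp e.adj
  refine ⟨v, ⟨e.snd, by lia⟩, hvW, fun h => hout ⟨_, h, rfl⟩, ?_, hve ▸ hvr⟩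
  exact latAdj_comm.mp (hve ▸ hadj)
end
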